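/- arXiv:1911.07979 — 3 statements merged into one kernel-verified Lean document; each statement's English description precedes it below -/
import Mathlib

section
/- Let T*_N be an optimum tree on N vertices and T*_{N−1} an optimum tree on N−1 vertices (trees maximizing the maximum number of vertices pairwise at distance at least h). Then 0 ≤ n*_h(T*_N) − n*_h(T*_{N−1}) ≤ 1, i.e., the optimum number of pairwise h-far vertices increases by at most one when the number of tree vertices increases by one. -/
/-!
Hanging a leaf on a tree with `N - 1` vertices gives a tree with `N` vertices in which the old
vertices are as far apart as before, so `n*_h` cannot drop from `N - 1` to `N`. Conversely, a tree
with `N ≥ 2` vertices has a vertex whose removal leaves a tree; distances in that subtree are at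
least those in the whole tree, so a set of pairwise far vertices loses at most the removed vertex.
-/

/-- `nstar G h` is the maximum number of vertices of `G` that are pairwise at
graph distance at least `h`. -/
noncomputable def nstar {V : Type*} (G : SimpleGraph V) (h : ℕ) : ℕ :=
  sSup {k | ∃ S : Finset V, S.card = k ∧ ∀ i ∈ S, ∀ j ∈ S, i ≠ j → h ≤ G.dist i j}

open Finset

namespace SimpleGraph

variable {V W : Type*} {G : SimpleGraph V} {H : SimpleGraph W}

theorem edist_apply_le_edist (g : W → V) (hg : ∀ ⦃x y⦄, H.Adj x y → G.edist (g x) (g y) ≤ 1)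
    (x y : W) : G.edist (g x) (g y) ≤ H.edist x y := by
  have walk_bound : ∀ {x y} (p : H.Walk x y), G.edist (g x) (g y) ≤ p.length := by
    intro x y p
    induction p with
    | nil => simp
    | cons hadj p ih =>
      calc _ ≤ G.edist (g _) (g _) + G.edist (g _) (g _) := G.edist_triangle
        _ ≤ 1 + p.length := add_le_add (hg hadj) ih
        _ = _ := by rw [Walk.length_cons, add_comm]; rfl
  by_cases hxy : H.Reachable x y
  · obtain ⟨p, hp⟩ := hxy.exists_walk_length_eq_edist
    exact hp ▸ walk_bound p
  · simp [edist_eq_top_of_not_reachable hxy]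

theorem dist_apply_le_dist (g : W → V) (hg : ∀ ⦃x y⦄, H.Adj x y → G.edist (g x) (g y) ≤ 1)
    {x y : W} (hxy : H.Reachable x y) : G.dist (g x) (g y) ≤ H.dist x y :=
  ENat.toNat_le_toNat (edist_apply_le_edist g hg x y) (edist_ne_top_iff_reachable.mpr hxy)

theorem Hom.edist_le (f : H →g G) (x y : W) : G.edist (f x) (f y) ≤ H.edist x y :=
  edist_apply_le_edist f (fun _ _ hxy ↦ (edist_eq_one_iff_adj.mpr (f.map_adj hxy)).le) x y

theorem Hom.dist_le (f : H →g G) {x y : W} (hxy : H.Reachable x y) :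
    G.dist (f x) (f y) ≤ H.dist x y :=
  ENat.toNat_le_toNat (f.edist_le x y) (edist_ne_top_iff_reachable.mpr hxy)

theorem Iso.dist_eq (f : G ≃g H) (x y : V) : H.dist (f x) (f y) = G.dist x y :=
  congrArg ENat.toNat <| le_antisymm (f.toHom.edist_le x y) <| by
    simpa using f.symm.toHom.edist_le (f x) (f y)

variable {v : V} {w : W}

theorem IsTree.sum_sup_edge [Finite V] [Finite W] (hG : G.IsTree) (hH : H.IsTree) :
    ((G ⊕g H) ⊔ edge (.inl v) (.inr w)).IsTree := by
  have hnew : s(.inl v, .inr w) ∉ (G ⊕g H).edgeSet := not_adj_sum_inl_inr (G := G) (H := H) v w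
  have hsum : Nat.card (G ⊕g H).edgeSet = Nat.card G.edgeSet + Nat.card H.edgeSet := by
    rw [Nat.card_congr edgeSetSumEquiv, Nat.card_sum]
  rw [isTree_iff_connected_and_card] at hG hH ⊢
  refine ⟨hG.1.sum_sup_edge hH.1, ?_⟩
  rw [edgeSet_sup, edgeSet_edge_of_ne Sum.inl_ne_inr, Set.union_singleton, Nat.card_coe_set_eq,
    Set.ncard_insert_of_notMem hnew, ← Nat.card_coe_set_eq, hsum, Nat.card_sum, ← hG.2, ← hH.2]
  ring

theorem dist_le_dist_sum_sup_edge (a b : V) :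
    G.dist a b ≤ ((G ⊕g H) ⊔ edge (.inl v) (.inr w)).dist (.inl a) (.inl b) := by
  by_cases hab : G.Reachable a b
  -- collapsing all of `W` onto `v` retracts the join onto `G` without stretching any edge
  · refine dist_apply_le_dist (G := G) (Sum.elim id fun _ ↦ v) (fun x y hxy ↦ ?_)
      ((hab.map Embedding.sumInl.toHom).mono le_sup_left)
    rw [edist_le_one_iff_adj_or_eq]
    rcases hxy with hxy | hxy
    · cases x <;> cases y <;> simp_all
    · grind
  · simp [dist_eq_zero_of_not_reachable hab]

theorem IsTree.exists_iso_fin [Finite V] (hG : G.IsTree) {n : ℕ} (hV : Nat.card V = n) :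
    ∃ U : SimpleGraph (Fin n), U.IsTree ∧ Nonempty (G ≃g U) := by
  subst hV
  let f := Iso.map (Finite.equivFin V) G
  exact ⟨_, f.isTree_iff.mp hG, ⟨f⟩⟩

end SimpleGraph

open SimpleGraph

section nstar

variable {V W : Type*} [Finite V] [Finite W] {G : SimpleGraph V} {H : SimpleGraph W} (h : ℕ)

theorem bddAbove_nstar_set :
    BddAbove {k | ∃ S : Finset V, #S = k ∧ ∀ i ∈ S, ∀ j ∈ S, i ≠ j → h ≤ G.dist i j} := by
  have := Fintype.ofFinite V
  exact ⟨Fintype.card V, fun _ ⟨S, hS, _⟩ ↦ hS ▸ S.card_le_univ⟩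

theorem card_le_nstar {S : Finset V} (hS : ∀ i ∈ S, ∀ j ∈ S, i ≠ j → h ≤ G.dist i j) :
    #S ≤ nstar G h :=
  le_csSup (bddAbove_nstar_set h) ⟨S, rfl, hS⟩

theorem exists_card_eq_nstar :
    ∃ S : Finset V, #S = nstar G h ∧ ∀ i ∈ S, ∀ j ∈ S, i ≠ j → h ≤ G.dist i j := by
  refine Nat.sSup_mem ?_ (bddAbove_nstar_set h)
  exact ⟨0, ∅, rfl, by simp⟩

theorem nstar_le_nstar_of_dist_le (f : V ↪ W) (hf : ∀ a b, G.dist a b ≤ H.dist (f a) (f b)) :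
    nstar G h ≤ nstar H h := by
  obtain ⟨S, hS, hfar⟩ := exists_card_eq_nstar (G := G) h
  rw [← hS, ← card_map f]
  refine card_le_nstar h fun i hi j hj hij ↦ ?_
  obtain ⟨a, ha, rfl⟩ := mem_map.mp hi
  obtain ⟨b, hb, rfl⟩ := mem_map.mp hj
  exact (hfar a ha b hb (ne_of_apply_ne f hij)).trans (hf a b)

theorem SimpleGraph.Iso.nstar_eq (f : G ≃g H) : nstar G h = nstar H h :=
  le_antisymm (nstar_le_nstar_of_dist_le h f.toEquiv.toEmbedding fun a b ↦ (f.dist_eq a b).ge) <| by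
    simpa using nstar_le_nstar_of_dist_le h f.symm.toEquiv.toEmbedding fun a b ↦
      (f.symm.dist_eq a b).ge

theorem nstar_le_nstar_induce_compl_singleton_add_one (v : V)
    (hv : (G.induce {v}ᶜ).Preconnected) : nstar G h ≤ nstar (G.induce {v}ᶜ) h + 1 := by
  classical
  obtain ⟨S, hS, hfar⟩ := exists_card_eq_nstar (G := G) h
  let S' := S.subtype (· ∈ ({v}ᶜ : Set V))
  have hS' : #S ≤ #S' + 1 := by
    have := pred_card_le_card_erase (s := S) (a := v)
    simp only [S', card_subtype, Set.mem_compl_singleton_iff, filter_ne']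
    omega
  have hfar' : ∀ i ∈ S', ∀ j ∈ S', i ≠ j → h ≤ (G.induce {v}ᶜ).dist i j := by
    intro i hi j hj hij
    exact (hfar i (mem_subtype.mp hi) j (mem_subtype.mp hj) (Subtype.coe_ne_coe.mpr hij)).trans
      ((Embedding.induce _).toHom.dist_le (hv i j))
  exact hS ▸ hS'.trans (Nat.add_le_add_right (card_le_nstar h hfar') 1)

theorem nstar_le_nstar_sum_sup_edge {v : V} {w : W} :
    nstar G h ≤ nstar ((G ⊕g H) ⊔ edge (.inl v) (.inr w)) h :=
  nstar_le_nstar_of_dist_le h .inl dist_le_dist_sum_sup_edge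

end nstar

/-- The optimum number of pairwise `h`-far vertices of optimum trees increases by
at most one when the number of tree vertices increases by one. -/
theorem optimum_tree_nstar_step
    (N h : ℕ) (hN : 2 ≤ N)
    (T : SimpleGraph (Fin N)) (T' : SimpleGraph (Fin (N - 1)))
    (hT : T.IsTree) (hT' : T'.IsTree)
    (hTopt : ∀ U : SimpleGraph (Fin N), U.IsTree → nstar U h ≤ nstar T h)
    (hT'opt : ∀ U : SimpleGraph (Fin (N - 1)), U.IsTree → nstar U h ≤ nstar T' h) :
    nstar T' h ≤ nstar T h ∧ nstar T h ≤ nstar T' h + 1 := by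
  constructor
  · let r : Fin (N - 1) := ⟨0, by omega⟩
    have hL := hT'.sum_sup_edge (v := r) (w := ()) (IsTree.of_subsingleton (G := ⊥))
    obtain ⟨U, hU, ⟨f⟩⟩ := hL.exists_iso_fin (n := N) (by simp; omega)
    calc nstar T' h ≤ nstar ((T' ⊕g ⊥) ⊔ edge (.inl r) (.inr ())) h :=
          nstar_le_nstar_sum_sup_edge h
      _ = nstar U h := f.nstar_eq h
      _ ≤ nstar T h := hTopt U hU
  · have : Nontrivial (Fin N) := Fin.nontrivial_iff_two_le.mpr hN
    obtain ⟨v, hv⟩ := hT.connected.exists_connected_induce_compl_singleton_of_finite_nontrivial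
    have hTv : (T.induce {v}ᶜ).IsTree := ⟨hv, hT.isAcyclic.induce _⟩
    obtain ⟨U, hU, ⟨f⟩⟩ := hTv.exists_iso_fin (n := N - 1) (by simp [filter_ne'])
    calc nstar T h ≤ nstar (T.induce {v}ᶜ) h + 1 :=
          nstar_le_nstar_induce_compl_singleton_add_one h v hv.preconnected
      _ = nstar U h + 1 := by rw [f.nstar_eq h]
      _ ≤ nstar T' h + 1 := Nat.add_le_add_right (hT'opt U hU) 1
end

section
/- Let h be even. Among all trees on N vertices, the maximum possible value of n*_h (the maximum number of vertices pairwise at distance at least h) equals ⌊(N−1)/(h/2)⌋, and this maximum is attained by a balanced starlike tree of height h/2. -/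
/-- A balanced starlike tree with root `r` and height `m`: every non-root vertex
has degree at most 2, every vertex is at depth at most `m`, some vertex is at
depth exactly `m`, and at most one leaf is at depth less than `m`. -/
def IsBalancedStarlike {N : ℕ} (T : SimpleGraph (Fin N)) (r : Fin N) (m : ℕ) : Prop :=
  (∀ v, v ≠ r → (T.neighborSet v).ncard ≤ 2) ∧
  (∀ v, T.dist r v ≤ m) ∧
  (∃ v, T.dist r v = m) ∧
  (∀ v w, v ≠ r → w ≠ r → (T.neighborSet v).ncard ≤ 1 → (T.neighborSet w).ncard ≤ 1 →
    T.dist r v < m → T.dist r w < m → v = w)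

/-!
If the points of `S` are pairwise at distance at least `2m` in a connected graph on `N`
vertices, then the ball of radius `m` around one of them and the balls of radius `m - 1` around
the others are pairwise disjoint. A connected graph with more than `j` vertices has at least
`j + 1` vertices within distance `j` of any vertex (along a geodesic leaving the ball), so
`|S| m + 1 ≤ N`.

Conversely, in the spider with `⌊(N - 1) / m⌋` legs of length `m` (and one shorter leg for the
remainder) the leg tips are pairwise at distance `2m`: the function equal to the depth on one leg
and to minus the depth elsewhere changes by at most one along each edge.
-/

open Finset

section

variable {V : Type*} {G : SimpleGraph V}

theorem nstar_le {h k : ℕ}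
    (H : ∀ S : Finset V, (∀ i ∈ S, ∀ j ∈ S, i ≠ j → h ≤ G.dist i j) → #S ≤ k) :
    nstar G h ≤ k :=
  csSup_le ⟨0, ∅, rfl, by simp⟩ (by rintro _ ⟨S, rfl, hS⟩; exact H S hS)

theorem le_nstar [Fintype V] {h : ℕ} {S : Finset V}
    (hS : ∀ i ∈ S, ∀ j ∈ S, i ≠ j → h ≤ G.dist i j) : #S ≤ nstar G h :=
  le_csSup ⟨Fintype.card V, by rintro _ ⟨T, rfl, -⟩; exact card_le_univ T⟩ ⟨S, rfl, hS⟩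

namespace SimpleGraph

theorem Walk.abs_sub_le_length (f : V → ℤ) (hf : ∀ a b, G.Adj a b → |f a - f b| ≤ 1)
    {u v : V} (p : G.Walk u v) : |f u - f v| ≤ p.length := by
  induction p with
  | nil => simp
  | @cons a b c hab q ih =>
    calc |f a - f c| ≤ |f a - f b| + |f b - f c| := abs_sub_le _ _ _
      _ ≤ 1 + q.length := add_le_add (hf a b hab) ih
      _ = (cons hab q).length := by rw [length_cons]; push_cast; ring

theorem Reachable.abs_sub_le_dist (f : V → ℤ) (hf : ∀ a b, G.Adj a b → |f a - f b| ≤ 1)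
    {u v : V} (huv : G.Reachable u v) : |f u - f v| ≤ G.dist u v := by
  obtain ⟨p, hp⟩ := huv.exists_walk_length_eq_dist
  exact hp ▸ p.abs_sub_le_length f hf

theorem Walk.dist_getVert_of_length_eq_dist {u v : V} {p : G.Walk u v}
    (hp : p.length = G.dist u v) {i : ℕ} (hi : i ≤ p.length) : G.dist u (p.getVert i) = i := by
  have h₁ := G.dist_le (p.take i)
  have h₂ := G.dist_le (p.drop i)
  have h₃ := (p.take i).reachable.dist_triangle_left v
  rw [Walk.take_length] at h₁
  rw [Walk.drop_length] at h₂
  omega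

theorem Connected.card_filter_dist_le [Fintype V] (hG : G.Connected) (x : V) {j : ℕ}
    (hj : j < Fintype.card V) : j + 1 ≤ #{v | G.dist x v ≤ j} := by
  by_cases! hall : ∀ v, G.dist x v ≤ j
  · simpa [hall] using hj
  obtain ⟨w, hw⟩ := hall
  obtain ⟨p, hp⟩ := hG.exists_walk_length_eq_dist x w
  have hdist (i : ℕ) (hi : i ≤ j) : G.dist x (p.getVert i) = i :=
    Walk.dist_getVert_of_length_eq_dist hp (by omega)
  calc j + 1 = #(range (j + 1)) := (card_range _).symm
    _ ≤ _ := by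
      refine card_le_card_of_injOn p.getVert (fun i hi => ?_) (fun a ha b hb hab => ?_)
      · simp only [coe_range, Set.mem_Iio] at hi
        simpa [hdist i (by omega)] using Nat.lt_succ_iff.mp hi
      · simp only [coe_range, Set.mem_Iio] at ha hb
        rw [← hdist a (by omega), ← hdist b (by omega), hab]

theorem Connected.card_mul_add_one_le [Fintype V] (hG : G.Connected) {m : ℕ}
    (hm : m < Fintype.card V) {S : Finset V}
    (hS : ∀ i ∈ S, ∀ j ∈ S, i ≠ j → 2 * m ≤ G.dist i j) : #S * m + 1 ≤ Fintype.card V := by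
  classical
  obtain rfl | ⟨r, hr⟩ := S.eq_empty_or_nonempty
  · simp only [card_empty]; omega
  obtain rfl | hm0 := Nat.eq_zero_or_pos m
  · simp only [mul_zero]; omega
  let radius (s : V) : ℕ := if s = r then m else m - 1
  let ball (s : V) : Finset V := {v | G.dist s v ≤ radius s}
  have hdisj : (S : Set V).PairwiseDisjoint ball := by
    intro s hs t ht hst
    refine Finset.disjoint_left.mpr fun v hvs hvt => ?_
    simp only [ball, mem_filter, mem_univ, true_and] at hvs hvt
    have hst_dist := hS s hs t ht hst
    have htri := hG.dist_triangle (u := s) (v := v) (w := t)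
    rw [G.dist_comm (u := v)] at htri
    have : radius s + radius t < 2 * m := by
      by_cases hsr : s = r
      · simp [radius, hsr, Ne.symm (hsr ▸ hst)]; omega
      · simp only [radius, hsr, if_false]; split_ifs <;> omega
    omega
  have hr_card : m + 1 ≤ #(ball r) := by simpa [ball, radius] using hG.card_filter_dist_le r hm
  have hs_card (s : V) (hs : s ∈ S.erase r) : m ≤ #(ball s) := by
    have := hG.card_filter_dist_le s (j := m - 1) (by omega)
    simp only [ball, radius, (mem_erase.mp hs).1, if_false]
    omega
  calc #S * m + 1 = #(S.erase r) * m + (m + 1) := by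
        rw [← card_erase_add_one hr]; ring
    _ ≤ ∑ s ∈ S.erase r, #(ball s) + #(ball r) :=
        add_le_add (by simpa using card_nsmul_le_sum _ _ _ hs_card) hr_card
    _ = #(S.biUnion ball) := by rw [sum_erase_add _ _ hr, card_biUnion hdisj]
    _ ≤ Fintype.card V := card_le_univ _

theorem Connected.nstar_two_mul_le [Fintype V] (hG : G.Connected) {m : ℕ} (hm : 0 < m)
    (hmV : m < Fintype.card V) : nstar G (2 * m) ≤ (Fintype.card V - 1) / m :=
  nstar_le fun _ hS => (Nat.le_div_iff_mul_le hm).mpr <|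
    Nat.le_sub_one_of_lt (hG.card_mul_add_one_le hmV hS)

end SimpleGraph

end

def parentGraph (N : ℕ) (parent : ℕ → ℕ) : SimpleGraph (Fin N) :=
  SimpleGraph.fromRel fun a b => (b : ℕ) ≠ 0 ∧ (a : ℕ) = parent b

namespace parentGraph

open SimpleGraph

variable {N : ℕ} {parent : ℕ → ℕ}

theorem adj_iff {a b : Fin N} : (parentGraph N parent).Adj a b ↔
    a ≠ b ∧ (((b : ℕ) ≠ 0 ∧ (a : ℕ) = parent b) ∨ ((a : ℕ) ≠ 0 ∧ (b : ℕ) = parent a)) :=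
  fromRel_adj _ _ _

theorem adj_of_eq_parent (hp : ∀ v, v ≠ 0 → parent v < v) {a b : Fin N} (hb : (b : ℕ) ≠ 0)
    (hab : (a : ℕ) = parent b) : (parentGraph N parent).Adj a b :=
  adj_iff.mpr ⟨fun h => by have := hp b hb; rw [h] at hab; omega, Or.inl ⟨hb, hab⟩⟩

theorem abs_sub_le_dist (f : ℕ → ℤ) (hf : ∀ v, v ≠ 0 → |f (parent v) - f v| ≤ 1)
    {a b : Fin N} (hab : (parentGraph N parent).Reachable a b) :
    |f a - f b| ≤ (parentGraph N parent).dist a b := by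
  refine hab.abs_sub_le_dist (fun v : Fin N => f v) fun u v huv => ?_
  obtain ⟨-, ⟨hv, hu⟩ | ⟨hu, hv⟩⟩ := adj_iff.mp huv
  · simpa only [hu] using hf v hv
  · simpa only [hv, abs_sub_comm] using hf u hu

theorem reachable_zero (hp : ∀ v, v ≠ 0 → parent v < v) (hN : 0 < N) (v : Fin N) :
    (parentGraph N parent).Reachable ⟨0, hN⟩ v := by
  induction v using WellFoundedLT.induction with
  | _ v ih =>
    by_cases hv : (v : ℕ) = 0
    · rw [show v = ⟨0, hN⟩ from Fin.ext hv]
    · let u : Fin N := ⟨parent v, (hp v hv).trans v.isLt⟩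
      exact (ih u (hp v hv)).trans (adj_of_eq_parent hp hv rfl).reachable

theorem connected (hp : ∀ v, v ≠ 0 → parent v < v) (hN : 0 < N) :
    (parentGraph N parent).Connected :=
  have : Nonempty (Fin N) := ⟨⟨0, hN⟩⟩
  ⟨fun u v => (reachable_zero hp hN u).symm.trans (reachable_zero hp hN v)⟩

theorem dist_zero (hp : ∀ v, v ≠ 0 → parent v < v) (hN : 0 < N) (depth : ℕ → ℕ)
    (h0 : depth 0 = 0) (hdepth : ∀ v, v ≠ 0 → depth (parent v) + 1 = depth v) (v : Fin N) :
    (parentGraph N parent).dist ⟨0, hN⟩ v = depth v := by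
  apply le_antisymm
  · induction v using WellFoundedLT.induction with
    | _ v ih =>
      by_cases hv : (v : ℕ) = 0
      · rw [show v = ⟨0, hN⟩ from Fin.ext hv]; simp
      · let u : Fin N := ⟨parent v, (hp v hv).trans v.isLt⟩
        calc _ ≤ (parentGraph N parent).dist ⟨0, hN⟩ u + (parentGraph N parent).dist u v :=
              (connected hp hN).dist_triangle
          _ ≤ depth (parent v) + 1 := by
              gcongr
              · exact ih u (hp v hv)
              · exact (dist_eq_one_iff_adj.mpr (adj_of_eq_parent hp hv rfl)).le
          _ = depth v := hdepth v hv
  · have := abs_sub_le_dist (fun v => (depth v : ℤ)) (fun v hv => by rw [← hdepth v hv]; simp)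
      (reachable_zero hp hN v)
    simp only [h0, CharP.cast_eq_zero, zero_sub, abs_neg, Nat.abs_cast] at this
    exact_mod_cast this

theorem isTree (hp : ∀ v, v ≠ 0 → parent v < v) (hN : 0 < N) :
    (parentGraph N parent).IsTree := by
  refine isTree_iff_connected_and_card.mpr ⟨connected hp hN, ?_⟩
  have hval {v : Fin N} (hv : v ≠ ⟨0, hN⟩) : (v : ℕ) ≠ 0 := fun h => hv (Fin.ext h)
  -- every nonzero vertex `v` owns exactly one edge, the one to its parent
  let edge (v : {v : Fin N // v ≠ ⟨0, hN⟩}) : (parentGraph N parent).edgeSet :=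
    ⟨s(⟨parent v, (hp v (hval v.2)).trans v.1.isLt⟩, v), adj_of_eq_parent hp (hval v.2) rfl⟩
  have hedge : Function.Bijective edge := by
    constructor
    · rintro ⟨v, hv⟩ ⟨w, hw⟩ h
      have := hp v (hval hv)
      have := hp w (hval hw)
      have h' := congrArg Subtype.val h
      simp only [edge, Sym2.eq_iff, Fin.ext_iff] at h'
      exact Subtype.ext (Fin.ext (show (v : ℕ) = w by omega))
    · rintro ⟨e, he⟩
      induction e using Sym2.ind with
      | _ a b =>
        obtain ⟨-, ⟨hb, hab⟩ | ⟨ha, hba⟩⟩ := adj_iff.mp he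
        · dsimp only at hb hab
          refine ⟨⟨b, fun h => hb (congrArg Fin.val h)⟩, Subtype.ext ?_⟩
          simp [edge, Fin.ext_iff, hab]
        · dsimp only at ha hba
          refine ⟨⟨a, fun h => ha (congrArg Fin.val h)⟩, Subtype.ext ?_⟩
          simp [edge, Fin.ext_iff, hba]
  rw [← Nat.card_eq_of_bijective edge hedge, Nat.card_eq_fintype_card,
    Fintype.card_subtype_compl]
  simp
  omega

end parentGraph

/-- Vertex `0` is the root and vertex `m * b + d + 1` (with `d < m`) lies on leg `b` at depth
`d + 1`, so the legs are the consecutive blocks `m * b + 1, …, m * b + m`. -/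
def spiderParent (m v : ℕ) : ℕ := if (v - 1) % m = 0 then 0 else v - 1

def spiderDepth (m v : ℕ) : ℕ := if v = 0 then 0 else (v - 1) % m + 1

def spiderLeg (m v : ℕ) : ℕ := (v - 1) / m

def spider (N m : ℕ) : SimpleGraph (Fin N) := parentGraph N (spiderParent m)

def spiderSignedDepth (m c v : ℕ) : ℤ :=
  if v ≠ 0 ∧ spiderLeg m v = c then spiderDepth m v else -(spiderDepth m v : ℤ)

section Spider

variable {m : ℕ}

theorem exists_eq_mul_add_add_one (hm : 0 < m) {v : ℕ} (hv : v ≠ 0) :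
    ∃ b d, d < m ∧ v = m * b + d + 1 :=
  ⟨(v - 1) / m, (v - 1) % m, Nat.mod_lt _ hm, by have := Nat.div_add_mod (v - 1) m; omega⟩

@[simp]
theorem spiderDepth_zero : spiderDepth m 0 = 0 := rfl

theorem spiderParent_eq {b d v : ℕ} (hd : d < m) (hv : v = m * b + d + 1) :
    spiderParent m v = if d = 0 then 0 else v - 1 := by
  simp [spiderParent, hv, Nat.mod_eq_of_lt hd]

theorem spiderDepth_eq {b d v : ℕ} (hd : d < m) (hv : v = m * b + d + 1) :
    spiderDepth m v = d + 1 := by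
  simp [spiderDepth, hv, Nat.mod_eq_of_lt hd]

theorem spiderLeg_eq {b d v : ℕ} (hd : d < m) (hv : v = m * b + d + 1) : spiderLeg m v = b := by
  simp [spiderLeg, hv, Nat.mul_add_div (d.zero_le.trans_lt hd), Nat.div_eq_of_lt hd]

theorem spiderParent_lt (hm : 0 < m) {v : ℕ} (hv : v ≠ 0) : spiderParent m v < v := by
  obtain ⟨b, d, hd, hv⟩ := exists_eq_mul_add_add_one hm hv
  rw [spiderParent_eq hd hv]
  split_ifs <;> omega

theorem spiderDepth_le (hm : 0 < m) (v : ℕ) : spiderDepth m v ≤ m := by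
  rcases eq_or_ne v 0 with rfl | hv
  · simp
  · obtain ⟨b, d, hd, hv⟩ := exists_eq_mul_add_add_one hm hv
    rw [spiderDepth_eq hd hv]
    omega

theorem spiderDepth_spiderParent (hm : 0 < m) {v : ℕ} (hv : v ≠ 0) :
    spiderDepth m (spiderParent m v) + 1 = spiderDepth m v := by
  obtain ⟨b, d, hd, hv⟩ := exists_eq_mul_add_add_one hm hv
  rw [spiderParent_eq hd hv, spiderDepth_eq hd hv]
  split_ifs with hd0
  · simp [hd0]
  · rw [spiderDepth_eq (b := b) (d := d - 1) (by omega) (by omega)]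
    omega

theorem abs_spiderSignedDepth_spiderParent_sub (hm : 0 < m) (c : ℕ) {v : ℕ} (hv : v ≠ 0) :
    |spiderSignedDepth m c (spiderParent m v) - spiderSignedDepth m c v| ≤ 1 := by
  obtain ⟨b, d, hd, hv⟩ := exists_eq_mul_add_add_one hm hv
  rw [spiderParent_eq hd hv]
  split_ifs with hd0
  · simp only [spiderSignedDepth, spiderDepth_eq hd hv, hd0, spiderDepth_zero]
    split_ifs <;> simp
  · have hd' : d - 1 < m := by omega
    have hv' : v - 1 = m * b + (d - 1) + 1 := by omega
    simp only [spiderSignedDepth, spiderDepth_eq hd hv, spiderDepth_eq hd' hv',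
      spiderLeg_eq hd hv, spiderLeg_eq hd' hv']
    split_ifs <;> simp [abs_le] <;> omega

end Spider

section SpiderGraph

open SimpleGraph

variable {N m : ℕ}

theorem spider_isTree (hm : 0 < m) (hN : 0 < N) : (spider N m).IsTree :=
  parentGraph.isTree (fun _ => spiderParent_lt hm) hN

theorem spider_dist_root (hm : 0 < m) (hN : 0 < N) (v : Fin N) :
    (spider N m).dist ⟨0, hN⟩ v = spiderDepth m v :=
  parentGraph.dist_zero (fun _ => spiderParent_lt hm) hN _ rfl
    (fun _ => spiderDepth_spiderParent hm) v

theorem two_mul_le_spider_dist (hm : 0 < m) (hN : 0 < N) {x y : Fin N}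
    (hx : spiderDepth m x = m) (hy : spiderDepth m y = m) (hxy : spiderLeg m x ≠ spiderLeg m y) :
    2 * m ≤ (spider N m).dist x y := by
  have hx0 : (x : ℕ) ≠ 0 := fun h => by rw [h, spiderDepth_zero] at hx; omega
  have hsigned := parentGraph.abs_sub_le_dist (spiderSignedDepth m (spiderLeg m x))
    (fun _ => abs_spiderSignedDepth_spiderParent_sub hm _) ((spider_isTree hm hN).connected x y)
  simp only [spiderSignedDepth, hx0, hx, hy, Ne.symm hxy, ne_eq, not_false_eq_true, and_self,
    if_true, and_false, if_false, sub_neg_eq_add] at hsigned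
  rw [abs_of_nonneg (by positivity)] at hsigned
  have : ((2 * m : ℕ) : ℤ) ≤ (parentGraph N (spiderParent m)).dist x y := by push_cast; linarith
  exact_mod_cast this

theorem eq_spiderParent_or_eq_succ_of_spider_adj (hm : 0 < m) {u v : Fin N} (hv : (v : ℕ) ≠ 0)
    (huv : (spider N m).Adj v u) : (u : ℕ) = spiderParent m v ∨ (u : ℕ) = v + 1 := by
  obtain ⟨-, ⟨hu0, hvu⟩ | ⟨-, hu⟩⟩ := parentGraph.adj_iff.mp huv
  · obtain ⟨b, d, hd, hu⟩ := exists_eq_mul_add_add_one hm hu0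
    rw [spiderParent_eq hd hu] at hvu
    split_ifs at hvu <;> omega
  · exact Or.inl hu

theorem spider_adj_succ (hm : 0 < m) {v : Fin N} (hv : (v : ℕ) ≠ 0)
    (hd : spiderDepth m v < m) (hvN : (v : ℕ) + 1 < N) : (spider N m).Adj v ⟨v + 1, hvN⟩ := by
  refine parentGraph.adj_of_eq_parent (fun _ => spiderParent_lt hm) (by simp) ?_
  obtain ⟨b, d, hd', hv'⟩ := exists_eq_mul_add_add_one hm hv
  rw [spiderDepth_eq hd' hv'] at hd
  rw [spiderParent_eq (b := b) (d := d + 1) hd (by simp only; omega)]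
  simp

theorem ncard_spider_neighborSet_le_two (hm : 0 < m) {v : Fin N} (hv : (v : ℕ) ≠ 0) :
    ((spider N m).neighborSet v).ncard ≤ 2 :=
  calc _ = (Fin.val '' (spider N m).neighborSet v).ncard :=
        (Set.ncard_image_of_injective _ Fin.val_injective).symm
    _ ≤ ({spiderParent m v, (v : ℕ) + 1} : Set ℕ).ncard :=
        Set.ncard_le_ncard (by rintro _ ⟨u, hu, rfl⟩; exact eq_spiderParent_or_eq_succ_of_spider_adj hm hv hu)
    _ ≤ 2 := (Set.ncard_insert_le _ _).trans (by simp)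

theorem two_le_ncard_spider_neighborSet (hm : 0 < m) {v : Fin N} (hv : (v : ℕ) ≠ 0)
    (hd : spiderDepth m v < m) (hvN : (v : ℕ) + 1 < N) :
    2 ≤ ((spider N m).neighborSet v).ncard := by
  have hp := spiderParent_lt hm hv
  let p : Fin N := ⟨spiderParent m v, hp.trans v.isLt⟩
  calc 2 = ({p, ⟨v + 1, hvN⟩} : Set (Fin N)).ncard :=
        (Set.ncard_pair (by simp [p, Fin.ext_iff]; omega)).symm
    _ ≤ _ := by
      refine Set.ncard_le_ncard ?_
      rintro _ (rfl | rfl)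
      · exact (parentGraph.adj_of_eq_parent (fun _ => spiderParent_lt hm) hv rfl).symm
      · exact spider_adj_succ hm hv hd hvN

theorem spider_isBalancedStarlike (hm : 0 < m) (hN : m < N) :
    IsBalancedStarlike (spider N m) ⟨0, by omega⟩ m := by
  have hN0 : 0 < N := by omega
  have hroot {v : Fin N} (hv : v ≠ ⟨0, hN0⟩) : (v : ℕ) ≠ 0 := fun h => hv (Fin.ext h)
  have hlast (v : Fin N) (hv : v ≠ ⟨0, hN0⟩) (hdeg : ((spider N m).neighborSet v).ncard ≤ 1)
      (hd : (spider N m).dist ⟨0, hN0⟩ v < m) : (v : ℕ) = N - 1 := by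
    rw [spider_dist_root hm hN0] at hd
    by_contra hne
    have := two_le_ncard_spider_neighborSet hm (hroot hv) hd (by omega)
    omega
  refine ⟨fun v hv => ncard_spider_neighborSet_le_two hm (hroot hv), fun v => ?_,
    ⟨⟨m, hN⟩, ?_⟩, fun v w hv hw hdv hdw hv' hw' => ?_⟩
  · exact (spider_dist_root hm hN0 v).trans_le (spiderDepth_le hm v)
  · rw [spider_dist_root hm hN0, spiderDepth_eq (b := 0) (d := m - 1) (by omega) (by simp; omega)]
    omega
  · exact Fin.ext ((hlast v hv hdv hv').trans (hlast w hw hdw hw').symm)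

theorem le_nstar_spider (hm : 0 < m) (hN : m < N) : (N - 1) / m ≤ nstar (spider N m) (2 * m) := by
  set q := (N - 1) / m
  have htip (b : Fin q) : m * b + m < N :=
    calc m * b + m = (b + 1) * m := by ring
      _ ≤ q * m := Nat.mul_le_mul_right _ b.isLt
      _ ≤ N - 1 := Nat.div_mul_le_self (N - 1) m
      _ < N := by omega
  let tip (b : Fin q) : Fin N := ⟨m * b + m, htip b⟩
  have htip_eq (b : Fin q) : (tip b : ℕ) = m * b + (m - 1) + 1 := by simp [tip]; omega
  have hdepth (b : Fin q) : spiderDepth m (tip b) = m := by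
    rw [spiderDepth_eq (by omega) (htip_eq b)]; omega
  have hleg (b : Fin q) : spiderLeg m (tip b) = b := spiderLeg_eq (by omega) (htip_eq b)
  have htip_inj : Function.Injective tip := fun b c h => Fin.ext (by
    rw [← hleg b, ← hleg c, h])
  calc q = #(univ.image tip) := by rw [card_image_of_injective _ htip_inj]; simp
    _ ≤ _ := by
      refine le_nstar ?_
      simp only [mem_image, mem_univ, true_and]
      rintro _ ⟨b, rfl⟩ _ ⟨c, rfl⟩ hbc
      refine two_mul_le_spider_dist hm (by omega) (hdepth b) (hdepth c) ?_
      rw [hleg, hleg]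
      exact fun h => hbc (congrArg tip (Fin.ext h))

end SpiderGraph

/-- For even `h = 2m`, among all trees on `N` vertices the maximum possible
`nstar` equals `⌊(N-1)/m⌋`, attained by a balanced starlike tree of height `m`. -/
theorem tree_nstar_max
    (N m : ℕ) (hm : 1 ≤ m) (hN : m + 1 ≤ N) :
    (∀ T : SimpleGraph (Fin N), T.IsTree → nstar T (2 * m) ≤ (N - 1) / m) ∧
    ∃ (T : SimpleGraph (Fin N)) (r : Fin N), T.IsTree ∧ IsBalancedStarlike T r m ∧
      nstar T (2 * m) = (N - 1) / m := by
  have hN0 : 0 < N := by omega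
  have hmN : m < Fintype.card (Fin N) := by simpa using hN
  refine ⟨fun T hT => by simpa using hT.connected.nstar_two_mul_le hm hmN,
    spider N m, ⟨0, hN0⟩, spider_isTree hm hN0, spider_isBalancedStarlike hm hN, ?_⟩
  refine le_antisymm ?_ (le_nstar_spider hm hN)
  simpa using (spider_isTree hm hN0).connected.nstar_two_mul_le hm hmN
end

section
/- If S ∈ ℝ^{N×N} is a cluster assignment matrix and Â ∈ ℝ^{N×N} is an adjacency matrix, and P is an N×N permutation matrix, then the pooled adjacency matrix A^p = Ŝᵀ Â Ŝ (where Ŝ = S(:, î) for a selected index set î) transforms under the graph permutation X → PX, Â → PÂPᵀ, S → PSPᵀ as A^p → Q A^p Qᵀ for the permutation matrix Q = P[î, î] restricted to the selected indices; hence the pooled graph obtained is isomorphic to the original pooled graph (graph permutation equivariance). -/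
/-!
The pooled adjacency `Ŝᵀ Â Ŝ` is the principal submatrix of `Sᵀ Â S` on the selected indices,
and conjugating by a permutation matrix only reindexes a matrix. Hence both sides of the
theorem are the principal submatrix of `Sᵀ Â S` on the indices `sel ∘ τ`.
-/

open Matrix

namespace Matrix

variable {l m n R : Type*}

theorem permMatrix_apply [DecidableEq n] [Zero R] [One R] (σ : Equiv.Perm n) (i j : n) :
    σ.permMatrix R i j = if σ i = j then 1 else 0 := by
  simp [eq_comm]

theorem permMatrix_mul_mul_transpose_permMatrix [Fintype n] [DecidableEq n] [NonAssocSemiring R]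
    (σ : Equiv.Perm n) (X : Matrix n n R) :
    σ.permMatrix R * X * (σ.permMatrix R)ᵀ = X.submatrix σ σ := by
  rw [transpose_permMatrix, PEquiv.toMatrix_toPEquiv_mul, PEquiv.mul_toMatrix_toPEquiv,
    submatrix_submatrix]
  rfl

theorem transpose_submatrix_mul_mul_submatrix [Fintype l] [NonUnitalNonAssocSemiring R]
    (S : Matrix l n R) (A : Matrix l l R) (f : m → n) :
    (S.submatrix id f)ᵀ * A * S.submatrix id f = (Sᵀ * A * S).submatrix f f := by
  rw [transpose_submatrix, submatrix_mul _ _ f id f Function.bijective_id,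
    submatrix_mul _ _ f id id Function.bijective_id]
  rfl

theorem transpose_submatrix_mul_mul_submatrix_equiv [Fintype l] [Fintype m]
    [NonUnitalNonAssocSemiring R] (S : Matrix l n R) (A : Matrix l l R) (e : m ≃ l) (f : m → n) :
    (S.submatrix e f)ᵀ * A.submatrix e e * S.submatrix e f = (Sᵀ * A * S).submatrix f f := by
  rw [transpose_submatrix, submatrix_mul_equiv, submatrix_mul_equiv]

end Matrix

theorem pooled_adjacency_permutation_equivariant_general
    (N M : ℕ) (S Ahat : Matrix (Fin N) (Fin N) ℝ)
    (σ : Equiv.Perm (Fin N)) (τ : Equiv.Perm (Fin M))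
    (sel : Fin M → Fin N)
    (P : Matrix (Fin N) (Fin N) ℝ) (hP : ∀ a b, P a b = if σ b = a then 1 else 0)
    (S' Ahat' : Matrix (Fin N) (Fin N) ℝ)
    (hS' : S' = P * S * Pᵀ) (hA' : Ahat' = P * Ahat * Pᵀ)
    (sel' : Fin M → Fin N) (hsel' : ∀ t, sel' t = σ (sel (τ t)))
    (Q : Matrix (Fin M) (Fin M) ℝ) (hQ : ∀ s u, Q s u = if τ s = u then 1 else 0) :
    (S'.submatrix id sel')ᵀ * Ahat' * (S'.submatrix id sel')
      = Q * ((S.submatrix id sel)ᵀ * Ahat * (S.submatrix id sel)) * Qᵀ := by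
  have hPσ : P = σ⁻¹.permMatrix ℝ := by
    ext a b
    simp only [hP, permMatrix_apply, Equiv.Perm.inv_eq_iff_eq, @eq_comm _ a]
  have hQτ : Q = τ.permMatrix ℝ := by
    ext s u
    rw [hQ, permMatrix_apply]
  have hsel'_eq : sel' = σ ∘ sel ∘ τ := funext hsel'
  subst hS' hA' hsel'_eq
  rw [hPσ, hQτ, permMatrix_mul_mul_transpose_permMatrix, permMatrix_mul_mul_transpose_permMatrix,
    permMatrix_mul_mul_transpose_permMatrix, transpose_submatrix_mul_mul_submatrix,
    transpose_submatrix_mul_mul_submatrix, submatrix_submatrix,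
    transpose_submatrix_mul_mul_submatrix_equiv, submatrix_submatrix]
  simp [Function.comp_def]

/-- Graph permutation equivariance of the pooled adjacency `A^p = Ŝᵀ Â Ŝ`:
under the graph permutation `S → P S Pᵀ`, `Â → P Â Pᵀ`, with the selected index
set permuted correspondingly (`sel' = σ ∘ sel ∘ τ`), the pooled adjacency
transforms as `A^p → Q A^p Qᵀ` for the permutation matrix `Q` of the induced
reordering `τ` of the selected indices; hence the pooled graphs are isomorphic. -/
theorem pooled_adjacency_permutation_equivariant
    (N M : ℕ) (S Ahat : Matrix (Fin N) (Fin N) ℝ)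
    (σ : Equiv.Perm (Fin N)) (τ : Equiv.Perm (Fin M))
    (sel : Fin M → Fin N) (hsel : Function.Injective sel)
    (P : Matrix (Fin N) (Fin N) ℝ) (hP : ∀ a b, P a b = if σ b = a then 1 else 0)
    (S' Ahat' : Matrix (Fin N) (Fin N) ℝ)
    (hS' : S' = P * S * Pᵀ) (hA' : Ahat' = P * Ahat * Pᵀ)
    (sel' : Fin M → Fin N) (hsel' : ∀ t, sel' t = σ (sel (τ t)))
    (Q : Matrix (Fin M) (Fin M) ℝ) (hQ : ∀ s u, Q s u = if τ s = u then 1 else 0) :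
    (S'.submatrix id sel')ᵀ * Ahat' * (S'.submatrix id sel')
      = Q * ((S.submatrix id sel)ᵀ * Ahat * (S.submatrix id sel)) * Qᵀ :=
  pooled_adjacency_permutation_equivariant_general N M S Ahat σ τ sel P hP S' Ahat' hS' hA' sel'
    hsel' Q hQ
end
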